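/- For all natural numbers x ≠ y and every real s, the incomplete Gaussian inner product of Hermite polynomials satisfies the Christoffel–Darboux-type identity: (x − y) · ∫_s^∞ e^{−t²/2}·He_x(t)·He_y(t) dt = e^{−s²/2} · ( He_x(s)·He_{y+1}(s) − He_{x+1}(s)·He_y(s) ). Consequently, for x ≠ y the discrete Hermite kernel equals K_s(x,y) = (2π·x!·y!)^{−1/2}·e^{−s²/2}·( He_x(s)·He_{y+1}(s) − He_{x+1}(s)·He_y(s) )/(x − y). -/

import Mathlib

/-!
Put `W = He_x·He_{y+1} − He_{x+1}·He_y`. The recurrences `He_n' = X·He_n − He_{n+1}`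
and `He_{n+1}' = (n+1)·He_n` give `W' − X·W = (y − x)·He_x·He_y`, that is,
`d/dt (e^{−t²/2}·W(t)) = (y − x)·e^{−t²/2}·He_x(t)·He_y(t)`. A polynomial times a Gaussian is
integrable and tends to `0` at `+∞`, so integrating this derivative over `(s, ∞)` gives the
identity; dividing by `x − y ≠ 0` gives the formula for the kernel.
-/

open scoped Nat

noncomputable section

/-- The discrete Hermite kernel with parameter `s ∈ ℝ`:
`K_s(x,y) = (2π·x!·y!)^{−1/2} ∫_s^∞ e^{−t²/2}·He_x(t)·He_y(t) dt` for `x, y ∈ ℕ`,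
where `He_n` is the probabilists' Hermite polynomial. -/
def discreteHermiteKernel (s : ℝ) (x y : ℕ) : ℝ :=
  (Real.sqrt (2 * Real.pi * (x ! : ℝ) * (y ! : ℝ)))⁻¹ *
    ∫ t in Set.Ioi s, Real.exp (-t ^ 2 / 2) * Polynomial.aeval t (Polynomial.hermite x) *
      Polynomial.aeval t (Polynomial.hermite y)

namespace Polynomial

theorem derivative_hermite (n : ℕ) :
    derivative (hermite n) = X * hermite n - hermite (n + 1) := by
  rw [hermite_succ, sub_sub_cancel]

theorem derivative_hermite_succ (n : ℕ) :
    derivative (hermite (n + 1)) = ((n : ℤ[X]) + 1) * hermite n := by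
  induction n with
  | zero => simp
  | succ n ih =>
    rw [hermite_succ (n + 1), derivative_sub, derivative_mul, derivative_X, ih, derivative_mul,
      derivative_hermite n]
    simp only [derivative_add, derivative_natCast, derivative_one]
    push_cast
    ring

theorem derivative_sub_X_mul_hermite_wronskian (x y : ℕ) :
    derivative (hermite x * hermite (y + 1) - hermite (x + 1) * hermite y)
        - X * (hermite x * hermite (y + 1) - hermite (x + 1) * hermite y)
      = ((y : ℤ[X]) - (x : ℤ[X])) * (hermite x * hermite y) := by
  simp only [derivative_sub, derivative_mul, derivative_hermite_succ, derivative_hermite]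
  ring

end Polynomial

open Polynomial MeasureTheory Filter Real Topology

variable {R : Type*}

theorem tendsto_pow_mul_exp_neg_mul_sq_atTop {b : ℝ} (hb : 0 < b) (n : ℕ) :
    Tendsto (fun t : ℝ => t ^ n * exp (-b * t ^ 2)) atTop (𝓝 0) := by
  have := (rpow_mul_exp_neg_mul_sq_isLittleO_exp_neg hb n).tendsto_zero_of_tendsto
    (tendsto_exp_atBot.comp (tendsto_id.const_mul_atTop_of_neg (by norm_num)))
  simpa only [rpow_natCast] using this

theorem integrable_aeval_mul_exp_neg_mul_sq [CommSemiring R] [Algebra R ℝ] {b : ℝ} (hb : 0 < b)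
    (p : R[X]) :
    Integrable fun t : ℝ => aeval t p * exp (-b * t ^ 2) := by
  induction p using Polynomial.induction_on' with
  | add p q hp hq =>
    exact (hp.add hq).congr (.of_forall fun t => by simp only [Pi.add_apply, map_add, add_mul])
  | monomial n a =>
    have hn : (-1 : ℝ) < n := neg_one_lt_zero.trans_le n.cast_nonneg
    simpa only [aeval_monomial, rpow_natCast, mul_assoc] using
      (integrable_rpow_mul_exp_neg_mul_sq hb hn).const_mul (algebraMap R ℝ a)

theorem tendsto_aeval_mul_exp_neg_mul_sq_atTop [CommSemiring R] [Algebra R ℝ] {b : ℝ}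
    (hb : 0 < b) (p : R[X]) :
    Tendsto (fun t : ℝ => aeval t p * exp (-b * t ^ 2)) atTop (𝓝 0) := by
  induction p using Polynomial.induction_on' with
  | add p q hp hq => simpa only [map_add, add_mul, add_zero] using hp.add hq
  | monomial n a =>
    simpa only [aeval_monomial, mul_assoc, mul_zero] using
      (tendsto_pow_mul_exp_neg_mul_sq_atTop hb n).const_mul (algebraMap R ℝ a)

theorem hasDerivAt_exp_neg_sq_div_two_mul_aeval [CommRing R] [Algebra R ℝ] (p : R[X]) (t : ℝ) :
    HasDerivAt (fun u : ℝ => exp (-u ^ 2 / 2) * aeval u p)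
      (exp (-t ^ 2 / 2) * aeval t (derivative p - X * p)) t := by
  have hgauss : HasDerivAt (fun u : ℝ => exp (-u ^ 2 / 2)) (exp (-t ^ 2 / 2) * -t) t := by
    have h : HasDerivAt (fun u : ℝ => -u ^ 2 / 2) (-t) t := by
      simpa using (((hasDerivAt_pow 2 t).neg).div_const 2).congr_deriv (by ring)
    simpa [mul_comm] using h.exp
  refine (hgauss.mul (p.hasDerivAt_aeval t)).congr_deriv ?_
  simp only [map_sub, map_mul, aeval_X]
  ring

theorem integral_Ioi_exp_neg_sq_div_two_mul_aeval_derivative_sub_X_mul [CommRing R]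
    [Algebra R ℝ] (p : R[X]) (s : ℝ) :
    ∫ t in Set.Ioi s, exp (-t ^ 2 / 2) * aeval t (derivative p - X * p)
      = -(exp (-s ^ 2 / 2) * aeval s p) := by
  have gaussian_eq (q : R[X]) : (fun t : ℝ => exp (-t ^ 2 / 2) * aeval t q)
      = fun t => aeval t q * exp (-(1 / 2) * t ^ 2) := by
    ext t; ring_nf
  have hint : IntegrableOn (fun t => exp (-t ^ 2 / 2) * aeval t (derivative p - X * p))
      (Set.Ioi s) := by
    rw [gaussian_eq]
    exact (integrable_aeval_mul_exp_neg_mul_sq one_half_pos _).integrableOn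
  have hlim : Tendsto (fun t => exp (-t ^ 2 / 2) * aeval t p) atTop (𝓝 0) := by
    rw [gaussian_eq]
    exact tendsto_aeval_mul_exp_neg_mul_sq_atTop one_half_pos p
  rw [integral_Ioi_of_hasDerivAt_of_tendsto'
    (fun t _ => hasDerivAt_exp_neg_sq_div_two_mul_aeval p t) hint hlim, zero_sub]

/-- For `x ≠ y` and any real `s`, the Christoffel–Darboux-type identity
`(x − y)·∫_s^∞ e^{−t²/2}·He_x(t)·He_y(t) dt
  = e^{−s²/2}·( He_x(s)·He_{y+1}(s) − He_{x+1}(s)·He_y(s) )` holds, and consequently the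
discrete Hermite kernel equals
`K_s(x,y) = (2π·x!·y!)^{−1/2}·e^{−s²/2}·( He_x(s)·He_{y+1}(s) − He_{x+1}(s)·He_y(s) )/(x−y)`. -/
theorem discreteHermiteKernel_christoffelDarboux_upper
    (x y : ℕ) (hxy : x ≠ y) (s : ℝ) :
    ((x : ℝ) - (y : ℝ)) *
        ∫ t in Set.Ioi s, Real.exp (-t ^ 2 / 2) * Polynomial.aeval t (Polynomial.hermite x) *
            Polynomial.aeval t (Polynomial.hermite y)
      = Real.exp (-s ^ 2 / 2) *
          (Polynomial.aeval s (Polynomial.hermite x) *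
              Polynomial.aeval s (Polynomial.hermite (y + 1))
            - Polynomial.aeval s (Polynomial.hermite (x + 1)) *
                Polynomial.aeval s (Polynomial.hermite y))
    ∧ discreteHermiteKernel s x y
      = (Real.sqrt (2 * Real.pi * (x ! : ℝ) * (y ! : ℝ)))⁻¹ * Real.exp (-s ^ 2 / 2) *
          (Polynomial.aeval s (Polynomial.hermite x) *
              Polynomial.aeval s (Polynomial.hermite (y + 1))
            - Polynomial.aeval s (Polynomial.hermite (x + 1)) *
                Polynomial.aeval s (Polynomial.hermite y))
          / ((x : ℝ) - (y : ℝ)) := by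
  have hW := integral_Ioi_exp_neg_sq_div_two_mul_aeval_derivative_sub_X_mul
    (hermite x * hermite (y + 1) - hermite (x + 1) * hermite y) s
  rw [derivative_sub_X_mul_hermite_wronskian] at hW
  simp only [map_mul, map_sub, map_natCast] at hW
  have identity : ((x : ℝ) - y) * ∫ t in Set.Ioi s,
      exp (-t ^ 2 / 2) * aeval t (hermite x) * aeval t (hermite y)
      = exp (-s ^ 2 / 2) * (aeval s (hermite x) * aeval s (hermite (y + 1))
        - aeval s (hermite (x + 1)) * aeval s (hermite y)) := by
    rw [← neg_neg (exp _ * _), ← hW, ← integral_const_mul, ← integral_neg]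
    congr 1 with t
    ring
  refine ⟨identity, ?_⟩
  have hxy' : (x : ℝ) - y ≠ 0 := sub_ne_zero.mpr (Nat.cast_injective.ne hxy)
  rw [discreteHermiteKernel, mul_assoc _ (exp _), mul_div_assoc, ← identity,
    mul_div_cancel_left₀ _ hxy']

end
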